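/- Let A be a commutative ring, M an A-module, f ∈ A, and c ∈ M^∧_f an element of the f-adic completion with fⁿc = 0 for some n ≥ 1. Suppose M has no f-torsion. For each i ≥ 1 let cᵢ ∈ M be an element whose image in M/fⁱM equals the image of c. Then for all i > n, cᵢ ∈ f^{i−n}M, and consequently c = 0. -/

import Mathlib

/-!
Evaluating `f ^ n • c = 0` at level `i` gives `f ^ n • cᵢ ∈ f ^ i M`, and since `f` is a
non-zero-divisor on `M` one cancels `f ^ n` to get `cᵢ ∈ f ^ (i - n) M`. The component of `c`
in `M / f ^ j M` is the image of `c_{j+n}`, which therefore vanishes.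
-/

open Pointwise

section PowSmulTop

variable {A M : Type*} [CommRing A] [AddCommGroup M] [Module A M]

theorem Submodule.mem_span_singleton_pow_smul_top_iff (f : A) (k : ℕ) (x : M) :
    x ∈ Ideal.span {f} ^ k • (⊤ : Submodule A M) ↔ ∃ m : M, f ^ k • m = x := by
  rw [Ideal.span_singleton_pow, Submodule.ideal_span_singleton_smul,
    Submodule.mem_smul_pointwise_iff_exists]
  simp only [Submodule.mem_top, true_and]

theorem IsSMulRegular.mem_span_singleton_pow_smul_top_of_pow_smul_mem {f : A}
    (hf : IsSMulRegular M f) {n i : ℕ} (hni : n ≤ i) {x : M}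
    (hx : f ^ n • x ∈ Ideal.span {f} ^ i • (⊤ : Submodule A M)) :
    x ∈ Ideal.span {f} ^ (i - n) • (⊤ : Submodule A M) := by
  obtain ⟨m, hm⟩ := (Submodule.mem_span_singleton_pow_smul_top_iff f i _).mp hx
  rw [← Nat.add_sub_cancel' hni, pow_add, mul_smul] at hm
  exact (Submodule.mem_span_singleton_pow_smul_top_iff f _ _).mpr ⟨m, hf.pow n hm⟩

end PowSmulTop

namespace AdicCompletion

variable {R M : Type*} [CommRing R] {I : Ideal R} [AddCommGroup M] [Module R M]

theorem smul_mem_pow_smul_top_of_smul_eq_zero {a : R} {c : AdicCompletion I M} (hc : a • c = 0)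
    {i : ℕ} {x : M} (hx : eval I M i c = Submodule.Quotient.mk x) :
    a • x ∈ I ^ i • (⊤ : Submodule R M) := by
  have h := congrArg (eval I M i) hc
  rwa [map_smul, hx, _root_.map_zero, ← Submodule.Quotient.mk_smul,
    Submodule.Quotient.mk_eq_zero] at h

theorem eq_zero_of_shifted_lifts_mem {c : AdicCompletion I M} {cs : ℕ → M}
    (hcs : ∀ i, eval I M i c = Submodule.Quotient.mk (cs i)) (n : ℕ)
    (h : ∀ j, cs (j + n) ∈ I ^ j • (⊤ : Submodule R M)) : c = 0 := by
  ext j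
  rw [val_zero_apply, ← transitionMap_comp_eval_apply I M (Nat.le_add_right j n), ← eval_apply,
    hcs]
  exact (Submodule.Quotient.mk_eq_zero _).mpr (h j)

end AdicCompletion

theorem stmt19_general (A : Type*) [CommRing A] (M : Type*) [AddCommGroup M] [Module A M] (f : A)
    (htf : ∀ m : M, f • m = 0 → m = 0)
    (c : AdicCompletion (Ideal.span {f}) M) (n : ℕ) (hc : f ^ n • c = 0)
    (cs : ℕ → M)
    (hcs : ∀ i : ℕ, AdicCompletion.eval (Ideal.span {f}) M i c =
      Submodule.Quotient.mk (cs i)) :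
    (∀ i : ℕ, n < i → cs i ∈ (Ideal.span {f}) ^ (i - n) • (⊤ : Submodule A M)) ∧
      c = 0 := by
  have hf : IsSMulRegular M f := IsSMulRegular.of_right_eq_zero_of_smul htf
  have hlift : ∀ i, n ≤ i → cs i ∈ (Ideal.span {f}) ^ (i - n) • (⊤ : Submodule A M) :=
    fun i hni ↦ hf.mem_span_singleton_pow_smul_top_of_pow_smul_mem hni
      (AdicCompletion.smul_mem_pow_smul_top_of_smul_eq_zero hc (hcs i))
  refine ⟨fun i hi ↦ hlift i hi.le, AdicCompletion.eq_zero_of_shifted_lifts_mem hcs n ?_⟩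
  intro j
  simpa using hlift (j + n) (Nat.le_add_left n j)

theorem stmt19 (A : Type*) [CommRing A] (M : Type*) [AddCommGroup M] [Module A M] (f : A)
    (htf : ∀ m : M, f • m = 0 → m = 0)
    (c : AdicCompletion (Ideal.span {f}) M) (n : ℕ) (hn : 1 ≤ n) (hc : f ^ n • c = 0)
    (cs : ℕ → M)
    (hcs : ∀ i : ℕ, AdicCompletion.eval (Ideal.span {f}) M i c =
      Submodule.Quotient.mk (cs i)) :
    (∀ i : ℕ, n < i → cs i ∈ (Ideal.span {f}) ^ (i - n) • (⊤ : Submodule A M)) ∧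
      c = 0 :=
  stmt19_general A M f htf c n hc cs hcs
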